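/- Let S be a set of vertices of the infinite cubic tree T_∞. If u and v are vertices of T_∞ at distance d from each other, then f(v,S) ≥ (1/2^d)·f(u,S). In particular, if f(u*,S) > 0 for some vertex u*, then f(u,S) > 0 for every vertex u of T_∞. -/

import Mathlib

open SimpleGraph
open scoped Classical ENNReal

/-- The graph obtained from `G` by deleting the vertices of `A`
(they are kept as isolated vertices, which does not affect adjacency or distances
among the remaining vertices). -/
def SimpleGraph.deleteSet {V : Type*} (G : SimpleGraph V) (A : Set V) : SimpleGraph V where
  Adj x y := G.Adj x y ∧ x ∉ A ∧ y ∉ A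
  symm := ⟨fun _ _ ⟨h, hx, hy⟩ => ⟨h.symm, hy, hx⟩⟩
  loopless := ⟨fun x ⟨h, _, _⟩ => G.loopless.irrefl x h⟩

/-- `dist_{(G,S)}(u,v)`: the distance between `u` and `v` in `G - (S \ {u,v})`,
with value `⊤` if there is no path between `u` and `v` in that graph. -/
noncomputable def distDel {V : Type*} (G : SimpleGraph V) (S : Set V) (u v : V) : ℕ∞ :=
  (G.deleteSet (S \ {u, v})).edist u v

/-- `w_{(G,S)}(u) = Σ_{v ∈ S} (1/2)^{dist_{(G,S)}(u,v) - 1}`, a sum with values in `[0,∞]`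
in which a summand with infinite distance equals `0`. -/
noncomputable def expWSet {V : Type*} (G : SimpleGraph V) (S : Set V) (u : V) : ℝ≥0∞ :=
  ∑' v : S, if distDel G S u (v : V) = ⊤ then 0
    else 2 * (2⁻¹ : ℝ≥0∞) ^ (distDel G S u (v : V)).toNat

/-- `S` is exponentially independent in `G`: `w_{(G,S∖{u})}(u) < 1` for every `u ∈ S`. -/
def ExpIndepSet {V : Type*} (G : SimpleGraph V) (S : Set V) : Prop :=
  ∀ u ∈ S, expWSet G (S \ {u}) u < 1

/-- `G` is an infinite cubic tree: a connected acyclic graph on a countably infinite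
vertex set in which every vertex has degree `3`. -/
def IsInfCubicTree {V : Type*} (G : SimpleGraph V) : Prop :=
  Countable V ∧ Infinite V ∧ G.Connected ∧ G.IsAcyclic ∧
    ∀ v : V, (G.neighborSet v).encard = 3

/-- `f(u,S) = limsup_{k→∞} |S ∩ B^k(u)| / |B^k(u)|`, where `B^k(u)` is the ball of
radius `k` around `u`, of cardinality `3·2^k - 2` in the infinite cubic tree. -/
noncomputable def ballDensity {V : Type*} (G : SimpleGraph V) (S : Set V) (u : V) : ℝ :=
  Filter.limsup (fun k : ℕ =>
    ((S ∩ {v : V | G.edist u v ≤ (k : ℕ∞)}).ncard : ℝ) / (3 * 2 ^ k - 2)) Filter.atTop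

/-!
Balls grow by a factor of about two per unit of radius: if `d(u, v) = d`, then
`B^k(u) ⊆ B^{k+d}(v)`, so `|S ∩ B^{k+d}(v)| / |B^{k+d}(v)|` is at least
`|B^k(u)| / |B^{k+d}(v)| → 2^{-d}` times `|S ∩ B^k(u)| / |B^k(u)|`; taking `limsup` gives
`f(v,S) ≥ 2^{-d} f(u,S)`. Since `T_∞` is connected, positivity of `f` then propagates.
-/

open Filter Topology

namespace Real

theorem limsup_nonneg_of_nonneg {b : ℕ → ℝ} (hb0 : ∀ k, 0 ≤ b k) : 0 ≤ limsup b atTop := by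
  by_cases hb : IsBoundedUnder (· ≤ ·) atTop b
  · exact le_limsup_of_frequently_le (Frequently.of_forall hb0) hb
  · rw [limsup_of_not_isBoundedUnder hb]

variable {a b r : ℕ → ℝ} {c : ℝ} {d : ℕ}

theorem isBoundedUnder_of_mul_le_shift (hc : 0 < c) (hr : Tendsto r atTop (𝓝 c))
    (hb0 : ∀ k, 0 ≤ b k) (ha : IsBoundedUnder (· ≤ ·) atTop a)
    (hba : ∀ k, b k * r k ≤ a (k + d)) : IsBoundedUnder (· ≤ ·) atTop b := by
  obtain ⟨M, hM⟩ := ha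
  refine ⟨2 / c * M, eventually_map.mpr ?_⟩
  filter_upwards [hr.eventually (eventually_ge_nhds (half_lt_self hc)),
    (tendsto_add_atTop_nat d).eventually hM] with k hrk haM
  rw [div_mul_eq_mul_div, le_div_iff₀ hc]
  nlinarith [hba k, hb0 k]

theorem mul_limsup_le_limsup_of_mul_le_shift (hr : Tendsto r atTop (𝓝 c)) (hr0 : ∀ k, 0 ≤ r k)
    (ha0 : ∀ k, 0 ≤ a k) (ha : IsBoundedUnder (· ≤ ·) atTop a)
    (hb : IsBoundedUnder (· ≤ ·) atTop b) (hab : ∀ k, a k * r k ≤ b (k + d)) :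
    c * limsup a atTop ≤ limsup b atTop := calc
  c * limsup a atTop = limsup a atTop * liminf r atTop := by rw [hr.liminf_eq, mul_comm]
  _ ≤ limsup (a * r) atTop :=
    le_limsup_mul (Frequently.of_forall ha0) ha (Eventually.of_forall hr0) hr.isBoundedUnder_le
  _ ≤ limsup (fun k ↦ b (k + d)) atTop :=
    limsup_le_limsup (Eventually.of_forall hab)
      (isCoboundedUnder_le_of_le atTop fun k ↦ mul_nonneg (ha0 k) (hr0 k))
      ((tendsto_add_atTop_nat d).isBoundedUnder_comp hb)
  _ = limsup b atTop := limsup_nat_add b d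

/-- The reverse comparison `hba` only serves to bound `b`: the `limsup` of a sequence that is
not bounded above is the junk value `0`. -/
theorem mul_limsup_le_limsup_of_mutual_mul_le_shift (hc : 0 < c)
    (hr : Tendsto r atTop (𝓝 c)) (hr0 : ∀ k, 0 ≤ r k) (ha0 : ∀ k, 0 ≤ a k) (hb0 : ∀ k, 0 ≤ b k)
    (hab : ∀ k, a k * r k ≤ b (k + d)) (hba : ∀ k, b k * r k ≤ a (k + d)) :
    c * limsup a atTop ≤ limsup b atTop := by
  by_cases ha : IsBoundedUnder (· ≤ ·) atTop a
  · exact mul_limsup_le_limsup_of_mul_le_shift hr hr0 ha0 ha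
      (isBoundedUnder_of_mul_le_shift hc hr hb0 ha hba) hab
  · rw [limsup_of_not_isBoundedUnder ha, mul_zero]
    exact limsup_nonneg_of_nonneg hb0

end Real

noncomputable def cubicBallCard (k : ℕ) : ℝ := 3 * 2 ^ k - 2

theorem cubicBallCard_pos (k : ℕ) : 0 < cubicBallCard k := by
  have : (1 : ℝ) ≤ 2 ^ k := one_le_pow₀ one_le_two
  unfold cubicBallCard
  linarith

theorem tendsto_cubicBallCard_div_cubicBallCard_add (d : ℕ) :
    Tendsto (fun k ↦ cubicBallCard k / cubicBallCard (k + d)) atTop (𝓝 (1 / 2 ^ d)) := by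
  have h : Tendsto (fun k : ℕ ↦ (2⁻¹ : ℝ) ^ k) atTop (𝓝 0) :=
    tendsto_pow_atTop_nhds_zero_of_lt_one (by norm_num) (by norm_num)
  have hlim : Tendsto (fun k ↦ (3 - 2 * (2⁻¹ : ℝ) ^ k) / (3 * 2 ^ d - 2 * (2⁻¹ : ℝ) ^ k))
      atTop (𝓝 ((3 - 2 * 0) / (3 * 2 ^ d - 2 * 0))) :=
    (tendsto_const_nhds.sub (h.const_mul 2)).div (tendsto_const_nhds.sub (h.const_mul 2))
      (by norm_num)
  convert hlim using 2 with k
  · rw [cubicBallCard, cubicBallCard, inv_pow, pow_add]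
    field_simp
  · field_simp
    ring

noncomputable def ballRatio {V : Type*} (G : SimpleGraph V) (S : Set V) (u : V) (k : ℕ) : ℝ :=
  ((S ∩ {v | G.edist u v ≤ (k : ℕ∞)}).ncard : ℝ) / cubicBallCard k

namespace SimpleGraph

variable {V : Type*} {G : SimpleGraph V} {S : Set V} {u v : V} {k : ℕ}

theorem exists_adj_of_edist_le_succ (h : G.edist u v ≤ k + 1) :
    ∃ w, G.edist u w ≤ k ∧ (v = w ∨ G.Adj w v) := by
  obtain ⟨n, hn⟩ := ENat.ne_top_iff_exists.mp (ne_top_of_le_ne_top (by simp) h)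
  obtain ⟨p, hp⟩ := exists_walk_of_edist_eq_coe (G.edist_comm.trans hn.symm)
  cases p with
  | nil => exact ⟨u, by simp, .inl rfl⟩
  | cons hadj q =>
    refine ⟨_, ?_, .inr hadj.symm⟩
    rw [edist_comm]
    calc G.edist _ u ≤ q.length := edist_le q
      _ ≤ k := by
        rw [← hn, ← hp, Walk.length_cons] at h
        exact_mod_cast Nat.succ_le_succ_iff.mp (by exact_mod_cast h)

theorem finite_setOf_edist_le (hG : ∀ v, (G.neighborSet v).Finite) (u : V) (k : ℕ) :
    {v | G.edist u v ≤ k}.Finite := by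
  induction k with
  | zero => simp
  | succ k ih =>
    refine (ih.biUnion fun w _ ↦ (hG w).insert w).subset fun v hv ↦ ?_
    obtain ⟨w, hw, hwv⟩ := exists_adj_of_edist_le_succ (k := k) (by exact_mod_cast hv)
    exact Set.mem_biUnion hw hwv

theorem setOf_edist_le_subset {u' : V} {d : ℕ} (h : G.edist u' u ≤ d) :
    {v | G.edist u v ≤ k} ⊆ {v | G.edist u' v ≤ (k + d : ℕ)} := fun v hv ↦ calc
  G.edist u' v ≤ G.edist u' u + G.edist u v := G.edist_triangle
  _ ≤ d + k := add_le_add h hv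
  _ = (k + d : ℕ) := by push_cast; ring

theorem ballRatio_nonneg (k : ℕ) : 0 ≤ ballRatio G S u k :=
  div_nonneg (Nat.cast_nonneg _) (cubicBallCard_pos k).le

theorem ballRatio_mul_le (hG : ∀ v, (G.neighborSet v).Finite) {d : ℕ} (h : G.edist v u ≤ d)
    (k : ℕ) :
    ballRatio G S u k * (cubicBallCard k / cubicBallCard (k + d)) ≤ ballRatio G S v (k + d) := by
  unfold ballRatio
  rw [div_mul_div_cancel₀ (cubicBallCard_pos k).ne']
  refine div_le_div_of_nonneg_right ?_ (cubicBallCard_pos _).le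
  have hsub := Set.inter_subset_inter_right S (setOf_edist_le_subset (k := k) h)
  exact_mod_cast Set.ncard_le_ncard hsub ((finite_setOf_edist_le hG v _).inter_of_right S)

theorem one_div_pow_mul_ballDensity_le (hG : ∀ v, (G.neighborSet v).Finite) {d : ℕ}
    (h : G.edist u v = d) : 1 / 2 ^ d * ballDensity G S u ≤ ballDensity G S v :=
  Real.mul_limsup_le_limsup_of_mutual_mul_le_shift (by positivity)
    (tendsto_cubicBallCard_div_cubicBallCard_add d)
    (fun k ↦ (div_pos (cubicBallCard_pos k) (cubicBallCard_pos (k + d))).le)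
    ballRatio_nonneg ballRatio_nonneg
    (ballRatio_mul_le hG (by rw [edist_comm, h]))
    (ballRatio_mul_le hG h.le)

end SimpleGraph

theorem IsInfCubicTree.finite_neighborSet {V : Type*} {G : SimpleGraph V}
    (hG : IsInfCubicTree G) (v : V) : (G.neighborSet v).Finite := by
  obtain ⟨-, -, -, -, hdeg⟩ := hG
  rw [← Set.encard_ne_top_iff, hdeg v]
  decide

/-- For a set `S` of vertices of the infinite cubic tree: if `u` and `v` are vertices at
distance `d`, then `f(v,S) ≥ (1/2^d)·f(u,S)`; in particular, if `f(u*,S) > 0` for some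
vertex `u*`, then `f(u,S) > 0` for every vertex `u`. -/
theorem stmt5 {V : Type*} (G : SimpleGraph V) (hG : IsInfCubicTree G) (S : Set V) :
    (∀ u v : V, ∀ d : ℕ, G.edist u v = (d : ℕ∞) →
      (1 / 2 ^ d : ℝ) * ballDensity G S u ≤ ballDensity G S v) ∧
    ((∃ ustar : V, 0 < ballDensity G S ustar) → ∀ u : V, 0 < ballDensity G S u) := by
  have hconn : G.Connected := hG.2.2.1
  have hdens (u v : V) (d : ℕ) (h : G.edist u v = d) :=
    SimpleGraph.one_div_pow_mul_ballDensity_le (S := S) hG.finite_neighborSet h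
  refine ⟨hdens, fun ⟨ustar, hstar⟩ u ↦ ?_⟩
  have hd : G.edist ustar u = (G.edist ustar u).toNat :=
    (ENat.natCast_toNat (SimpleGraph.edist_ne_top_iff_reachable.mpr (hconn ustar u))).symm
  exact (mul_pos (by positivity) hstar).trans_le (hdens ustar u _ hd)
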